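/- Let A_{m,n} = aᵐ(a⁺)ⁿ acting on the rescaled Hermite basis H_μ, so that A_{m,n} H_μ = ħ^{(m+n)/2} √((μ+1)⋯(μ+n)·(μ+n)(μ+n−1)⋯(μ+n−m+1)) H_{μ+n−m}. If a finite linear combination Σ c_{mn} A_{m,n} satisfies ‖Σ c_{mn}A_{m,n} H_μ‖ = O((μħ)^N) for every N (uniformly as μħ stays bounded away from issues, i.e., O((μħ)^∞)), then all coefficients c_{mn} vanish. -/

import Mathlib

/-!
Pairing with `H (μ + d)` extracts from the vector the scalar `∑ c p * wordCoef ℏ p.1 p.2 μ` over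
the words of shift `d = n - m`; the case `N = 0` keeps it bounded in `μ`. Since
`wordCoef ℏ m n μ ~ (ℏ μ) ^ ((m + n) / 2)` and words of equal shift and equal degree `m + n`
coincide, the top-degree word of each shift dominates, so its coefficient vanishes unless its
degree is `0`. The last coefficient `c (0, 0)` is killed by the case `N = 1` at `μ = 0`.
-/

open Filter Topology Finset

theorem tendsto_prod_add_div_pow_atTop {ι : Type*} (s : Finset ι) (a : ι → ℝ) :
    Tendsto (fun x : ℝ => (∏ i ∈ s, (x + a i)) / x ^ #s) atTop (𝓝 1) := by
  have hlim : Tendsto (fun x : ℝ => ∏ i ∈ s, (1 + a i / x)) atTop (𝓝 (∏ _i ∈ s, (1 : ℝ))) :=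
    tendsto_finsetProd s fun i _ => by
      simpa using tendsto_const_nhds.add
        (tendsto_const_nhds.div_atTop (tendsto_id : Tendsto (fun x : ℝ => x) atTop atTop))
  rw [prod_const_one] at hlim
  refine hlim.congr' ?_
  filter_upwards [eventually_gt_atTop 0] with x hx
  rw [← prod_const, ← prod_div_distrib]
  exact prod_congr rfl fun i _ => by field_simp

theorem Orthonormal.norm_sum_filter_le {𝕜 E ι κ : Type*} [RCLike 𝕜] [NormedAddCommGroup E]
    [InnerProductSpace 𝕜 E] [DecidableEq ι] {H : ι → E} (hH : Orthonormal 𝕜 H)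
    (s : Finset κ) (b : κ → 𝕜) (f : κ → ι) (i : ι) :
    ‖∑ p ∈ s with f p = i, b p‖ ≤ ‖∑ p ∈ s, b p • H (f p)‖ := by
  have hinner : inner 𝕜 (H i) (∑ p ∈ s, b p • H (f p)) = ∑ p ∈ s with f p = i, b p := by
    simp only [inner_sum, inner_smul_right, orthonormal_iff_ite.mp hH, mul_ite, mul_one,
      mul_zero, sum_filter, eq_comm]
  calc ‖∑ p ∈ s with f p = i, b p‖ = ‖inner 𝕜 (H i) (∑ p ∈ s, b p • H (f p))‖ := by rw [hinner]
    _ ≤ ‖H i‖ * ‖∑ p ∈ s, b p • H (f p)‖ := norm_inner_le_norm _ _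
    _ = ‖∑ p ∈ s, b p • H (f p)‖ := by rw [hH.1 i, one_mul]

theorem eq_zero_of_bounded_sum_of_dominant {ι α : Type*} {l : Filter α} [l.NeBot]
    {s : Finset ι} {q : ι} (hq : q ∈ s) (c : ι → ℂ) (g : ι → α → ℝ) (φ : α → ℝ)
    (hφ : Tendsto φ l atTop)
    (hgq : Tendsto (fun x => g q x / φ x) l (𝓝 1))
    (hg : ∀ p ∈ s, p ≠ q → c p ≠ 0 → Tendsto (fun x => g p x / φ x) l (𝓝 0))
    (C : ℝ) (hC : ∀ᶠ x in l, ‖∑ p ∈ s, c p * g p x‖ ≤ C) : c q = 0 := by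
  classical
  have hlim : Tendsto (fun x => ∑ p ∈ s, c p * ((g p x / φ x : ℝ) : ℂ)) l (𝓝 (c q)) := by
    have hsum : (∑ p ∈ s, if p = q then c p else 0) = c q := by simp [hq]
    rw [← hsum]
    refine tendsto_finsetSum s fun p hp => ?_
    by_cases hpq : p = q
    · subst hpq
      simpa using (hgq.ofReal).const_mul (c p)
    by_cases hcp : c p = 0
    · simp [hcp]
    · simpa [hpq] using ((hg p hp hpq hcp).ofReal).const_mul (c p)
  have hzero : Tendsto (fun x => ∑ p ∈ s, c p * ((g p x / φ x : ℝ) : ℂ)) l (𝓝 0) := by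
    refine squeeze_zero_norm' ?_ ((tendsto_const_nhds (x := C)).div_atTop hφ)
    filter_upwards [hC, hφ.eventually_gt_atTop 0] with x hCx hφx
    have hfactor : ∑ p ∈ s, c p * ((g p x / φ x : ℝ) : ℂ) =
        (∑ p ∈ s, c p * g p x) / (φ x : ℂ) := by
      rw [sum_div]
      exact sum_congr rfl fun p _ => by push_cast; ring
    rw [hfactor, norm_div, Complex.norm_real, Real.norm_of_nonneg hφx.le]
    exact div_le_div_of_nonneg_right hCx hφx.le
  exact tendsto_nhds_unique hlim hzero

/-- `A_{m,n} H_μ = wordCoef ℏ m n μ • H_{μ+n-m}`. -/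
noncomputable def wordCoef (ℏ : ℝ) (m n μ : ℕ) : ℝ :=
  √(ℏ ^ (m + n) * (∏ j ∈ range n, ((μ : ℝ) + 1 + (j : ℝ))) *
    (∏ j ∈ range m, ((μ + n - j : ℕ) : ℝ)))

theorem wordCoef_zero_zero_zero (ℏ : ℝ) : wordCoef ℏ 0 0 0 = 1 := by
  simp [wordCoef]

section Asymptotics

variable {ℏ : ℝ} (hℏ : 0 < ℏ)
include hℏ

theorem tendsto_sqrt_mul_pow_atTop {k : ℕ} (hk : k ≠ 0) :
    Tendsto (fun μ : ℕ => √((ℏ * μ) ^ k)) atTop atTop :=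
  Real.tendsto_sqrt_atTop.comp
    ((tendsto_pow_atTop hk).comp (tendsto_natCast_atTop_atTop.const_mul_atTop hℏ))

theorem tendsto_wordCoef_div (m n : ℕ) :
    Tendsto (fun μ : ℕ => wordCoef ℏ m n μ / √((ℏ * μ) ^ (m + n))) atTop (𝓝 1) := by
  have hprod := fun (k : ℕ) (a : ℕ → ℝ) =>
    (tendsto_prod_add_div_pow_atTop (range k) a).comp tendsto_natCast_atTop_atTop
  have hlim := (Real.continuous_sqrt.tendsto _).comp
    ((hprod n fun j => 1 + j).mul (hprod m fun j => (n : ℝ) - j))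
  simp only [card_range, mul_one, Real.sqrt_one] at hlim
  refine hlim.congr' ?_
  filter_upwards [eventually_ge_atTop (max m 1)] with μ hμ
  have hμ0 : (0 : ℝ) < μ := by exact_mod_cast (show 0 < μ by omega)
  have hcast :
      ∏ j ∈ range m, ((μ + n - j : ℕ) : ℝ) = ∏ j ∈ range m, ((μ : ℝ) + ((n : ℝ) - j)) :=
    prod_congr rfl fun j hj => by
      rw [Nat.cast_sub (by simp at hj; omega)]
      push_cast
      ring
  have hpow : (0 : ℝ) ≤ (ℏ * μ) ^ (m + n) := by positivity
  simp only [Function.comp_apply, wordCoef, hcast, ← Real.sqrt_div' _ hpow]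
  congr 1
  simp only [add_assoc]
  field_simp
  ring

theorem tendsto_wordCoef_div_of_lt {m n D : ℕ} (h : m + n < D) :
    Tendsto (fun μ : ℕ => wordCoef ℏ m n μ / √((ℏ * μ) ^ D)) atTop (𝓝 0) := by
  refine ((tendsto_wordCoef_div hℏ m n).div_atTop
    (tendsto_sqrt_mul_pow_atTop hℏ (Nat.sub_ne_zero_of_lt h))).congr' ?_
  filter_upwards [eventually_gt_atTop 0] with μ hμ
  have hpos : (0 : ℝ) ≤ ℏ * μ := by positivity
  rw [div_div, ← Real.sqrt_mul (pow_nonneg hpos _), ← pow_add, Nat.add_sub_cancel' h.le]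

end Asymptotics

def wordShift (p : ℕ × ℕ) : ℤ := p.2 - p.1

section Vanishing

variable {E : Type*} [NormedAddCommGroup E] [InnerProductSpace ℂ E] {ℏ : ℝ} {H : ℕ → E}
  {S : Finset (ℕ × ℕ)} {c : ℕ × ℕ → ℂ} {C : ℝ}

theorem eventually_norm_sum_wordShift_le (hH : Orthonormal ℂ H)
    (hC : ∀ μ : ℕ, ‖∑ p ∈ S, c p • ((wordCoef ℏ p.1 p.2 μ : ℂ) • H (μ + p.2 - p.1))‖ ≤ C)
    (d : ℤ) :
    ∀ᶠ μ in atTop, ‖∑ p ∈ S with wordShift p = d, c p * wordCoef ℏ p.1 p.2 μ‖ ≤ C := by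
  have hlarge : ∀ᶠ μ in atTop, d.natAbs ≤ μ ∧ ∀ p ∈ S, p.1 ≤ μ :=
    (eventually_ge_atTop _).and ((eventually_all_finset S).2 fun p _ => eventually_ge_atTop p.1)
  filter_upwards [hlarge] with μ ⟨hdμ, hSμ⟩
  have hfilter : (S.filter fun p => wordShift p = d) =
      S.filter fun p => μ + p.2 - p.1 = (μ + d).toNat :=
    filter_congr fun p hp => by have := hSμ p hp; unfold wordShift; omega
  rw [hfilter]
  refine (hH.norm_sum_filter_le S _ (fun p => μ + p.2 - p.1) _).trans ?_
  simpa only [smul_smul] using hC μ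

theorem coeff_eq_zero_of_bounded (hℏ : 0 < ℏ) (hH : Orthonormal ℂ H)
    (hC : ∀ μ : ℕ, ‖∑ p ∈ S, c p • ((wordCoef ℏ p.1 p.2 μ : ℂ) • H (μ + p.2 - p.1))‖ ≤ C)
    {p₀ : ℕ × ℕ} (hp₀ : p₀ ∈ S) (hne : p₀ ≠ (0, 0)) : c p₀ = 0 := by
  by_contra hc₀
  obtain ⟨q, hqT, hqmax⟩ :=
    (S.filter fun p => wordShift p = wordShift p₀ ∧ c p ≠ 0).exists_max_image
      (fun p => p.1 + p.2) ⟨p₀, by simp [hp₀, hc₀]⟩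
  obtain ⟨hqS, hq_shift, hcq⟩ := by simpa only [mem_filter] using hqT
  have hdeg_lt : ∀ p ∈ S.filter fun p => wordShift p = wordShift q, p ≠ q → c p ≠ 0 →
      p.1 + p.2 < q.1 + q.2 := by
    intro p hp hpq hcp
    rw [mem_filter, hq_shift] at hp
    have hle := hqmax p (mem_filter.2 ⟨hp.1, hp.2, hcp⟩)
    have hp_shift := hp.2
    unfold wordShift at hq_shift hp_shift
    refine lt_of_le_of_ne hle fun hdeg => hpq (Prod.ext ?_ ?_) <;> omega
  have hD : q.1 + q.2 ≠ 0 := by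
    have hle := hqmax p₀ (by simp [hp₀, hc₀])
    have hp₀_pos : p₀.1 ≠ 0 ∨ p₀.2 ≠ 0 := by
      by_contra! h
      exact hne (Prod.ext h.1 h.2)
    omega
  exact hcq (eq_zero_of_bounded_sum_of_dominant (l := atTop)
    (s := S.filter fun p => wordShift p = wordShift q) (mem_filter.2 ⟨hqS, rfl⟩) c
    (fun p μ => wordCoef ℏ p.1 p.2 μ) (fun μ => √((ℏ * μ) ^ (q.1 + q.2)))
    (tendsto_sqrt_mul_pow_atTop hℏ hD) (tendsto_wordCoef_div hℏ _ _)
    (fun p hp hpq hcp => tendsto_wordCoef_div_of_lt hℏ (hdeg_lt p hp hpq hcp)) C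
    (eventually_norm_sum_wordShift_le hH hC _))

end Vanishing

/-- if a finite linear combination Σ c_{mn} A_{m,n} of words
A_{m,n} = aᵐ(a⁺)ⁿ, with A_{m,n}H_μ = ℏ^{(m+n)/2}√((μ+1)⋯(μ+n)·(μ+n)⋯(μ+n−m+1)) H_{μ+n−m},
satisfies ‖Σ c_{mn}A_{m,n}H_μ‖ = O((μℏ)^N) for every N, then all c_{mn} = 0. -/
theorem stmt_6 {E : Type*} [NormedAddCommGroup E] [InnerProductSpace ℂ E]
    (ℏ : ℝ) (hℏ : 0 < ℏ) (H : ℕ → E) (hH : Orthonormal ℂ H)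
    (S : Finset (ℕ × ℕ)) (c : ℕ × ℕ → ℂ)
    (coef : ℕ → ℕ → ℕ → ℝ)
    (hcoef : ∀ m n μ : ℕ, coef m n μ =
      Real.sqrt (ℏ ^ (m + n) * (∏ j ∈ Finset.range n, ((μ : ℝ) + 1 + (j : ℝ))) *
        (∏ j ∈ Finset.range m, ((μ + n - j : ℕ) : ℝ))))
    (hbound : ∀ N : ℕ, ∃ C : ℝ, ∀ μ : ℕ,
      ‖∑ p ∈ S, c p • (((coef p.1 p.2 μ : ℝ) : ℂ) • H (μ + p.2 - p.1))‖
        ≤ C * ((μ : ℝ) * ℏ) ^ N) :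
    ∀ p ∈ S, c p = 0 := by
  obtain rfl : coef = wordCoef ℏ := by
    funext m n μ
    exact hcoef m n μ
  obtain ⟨C, hC⟩ := hbound 0
  simp only [pow_zero, mul_one] at hC
  have hoff : ∀ p ∈ S, p ≠ (0, 0) → c p = 0 := fun p hp hne =>
    coeff_eq_zero_of_bounded hℏ hH hC hp hne
  intro p hp
  by_cases hp0 : p = (0, 0)
  · subst hp0
    obtain ⟨C₀, hC₀⟩ := hbound 1
    have hμ0 := hC₀ 0
    rw [sum_eq_single_of_mem _ hp fun b hb hbp => by rw [hoff b hb hbp, zero_smul]] at hμ0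
    simpa [wordCoef_zero_zero_zero, hH.ne_zero 0] using hμ0
  · exact hoff p hp hp0
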